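/- For α ≥ 1 and β ∈ (−1,0), the Weyl–Titchmarsh m-function m_{0,α,β}(z) = 2^{1+α+β} β (Γ(1+β)/Γ(1−β)) · Γ((1+α−β+σ)/2)Γ((1+α−β−σ)/2) / (Γ((1+α+β+σ)/2)Γ((1+α+β−σ)/2)), with σ = σ_{α,β}(z) = ((1+α+β)²+4z)^{1/2}, has poles (as a function of z ∈ ℂ) precisely at z = (n−β)(n+1+α), n ∈ ℕ₀. -/

import Mathlib

open Filter

/-- `σ_{α,β}(z) = ((1+α+β)² + 4z)^{1/2}` (principal branch). -/
noncomputable def jacobiSigma (α β : ℝ) (z : ℂ) : ℂ :=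
  (((1 : ℂ) + α + β) ^ 2 + 4 * z) ^ ((1 : ℂ) / 2)

/-- The Weyl–Titchmarsh `m`-function `m_{0,α,β}` for `α ≥ 1`, `β ∈ (-1,0)`. -/
noncomputable def jacobiWTm (α β : ℝ) (z : ℂ) : ℂ :=
  (2 : ℂ) ^ ((1 : ℂ) + α + β) * (β : ℂ)
    * (Complex.Gamma (1 + β) / Complex.Gamma (1 - β))
    * (Complex.Gamma ((1 + α - β + jacobiSigma α β z) / 2)
        * Complex.Gamma ((1 + α - β - jacobiSigma α β z) / 2))
    / (Complex.Gamma ((1 + α + β + jacobiSigma α β z) / 2)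
        * Complex.Gamma ((1 + α + β - jacobiSigma α β z) / 2))

/-!
Write `m_{0,α,β}(z) = F(σ(z))`, where `F(s)` is the quotient of Gamma values. Since `1 / Γ` is
entire, `F` is continuous wherever the two numerator Gammas are finite. At
`z₀ = (n - β)(n + 1 + α)` one has `σ(z₀) = 1 + α - β + 2n`; there `σ` is continuous and
injective, `Γ((1 + α - β - σ) / 2)` runs into its pole at `-n`, and the remaining factors stay
finite and nonzero because `β ∉ ℤ`. At any other `z₀` neither numerator Gamma is at a pole at
`σ(z₀)`, and `m` has a finite limit along `z = ((σ(z₀) + t)² - (1 + α + β)²) / 4`, `t ↓ 0`,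
on which `σ = σ(z₀) + t`; this path avoids the branch cut of `σ`.
-/

open Topology Complex

namespace Complex

theorem eventually_Gamma_ne_zero_nhdsNE (z : ℂ) : ∀ᶠ s in 𝓝[≠] z, Gamma s ≠ 0 := by
  have hzeros := AnalyticOnNhd.preimage_zero_mem_codiscrete
    (fun s _ ↦ differentiable_one_div_Gamma.analyticAt s) (x := 1) (by simp)
  filter_upwards [mem_codiscreteWithin_iff_forall_mem_nhdsNE.1 hzeros z trivial] with s hs
  simpa using hs

theorem tendsto_norm_Gamma_nhdsNE_neg_nat (n : ℕ) :
    Tendsto (fun s ↦ ‖Gamma s‖) (𝓝[≠] (-n : ℂ)) atTop := by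
  have hinv : Tendsto (fun s ↦ ‖(Gamma s)⁻¹‖) (𝓝[≠] (-n : ℂ)) (𝓝[>] 0) := by
    refine tendsto_nhdsWithin_iff.2 ⟨?_, ?_⟩
    · simpa [Gamma_neg_nat_eq_zero] using
        (differentiable_one_div_Gamma.continuous.norm.tendsto (-n : ℂ)).mono_left
          nhdsWithin_le_nhds
    · filter_upwards [eventually_Gamma_ne_zero_nhdsNE _] with s hs
      simpa using hs
  refine hinv.inv_tendsto_nhdsGT_zero.congr fun s ↦ ?_
  simp

theorem ne_neg_natCast_of_re_pos {s : ℂ} (hs : 0 < s.re) (m : ℕ) : s ≠ -m := by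
  rintro rfl
  exact absurd hs (by simp)

theorem ofReal_sub_natCast_ne_neg_natCast {x : ℝ} (hx : x ∈ Set.Ioo (-1 : ℝ) 0) (n m : ℕ) :
    (x : ℂ) - n ≠ -m := by
  intro h
  have hx_int : x = ((n - m : ℤ) : ℝ) := by
    have h_re := congrArg re h
    simp only [sub_re, ofReal_re, natCast_re, neg_re] at h_re
    push_cast
    linarith
  obtain ⟨h₁, h₂⟩ := hx
  rw [hx_int] at h₁ h₂
  have : (-1 : ℤ) < n - m := by exact_mod_cast h₁
  have : (n - m : ℤ) < 0 := by exact_mod_cast h₂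
  omega

end Complex

section

variable {α β : ℝ}

theorem jacobiSigma_sq (α β : ℝ) (z : ℂ) :
    jacobiSigma α β z ^ 2 = (1 + α + β) ^ 2 + 4 * z := by
  simp [jacobiSigma, one_div, cpow_ofNat_inv_pow]

theorem jacobiSigma_injective (α β : ℝ) : Function.Injective (jacobiSigma α β) := by
  intro z z' h
  have hsq := jacobiSigma_sq α β z
  rw [h, jacobiSigma_sq] at hsq
  linear_combination (-1 / 4 : ℂ) * hsq

theorem re_jacobiSigma_nonneg (α β : ℝ) (z : ℂ) : 0 ≤ (jacobiSigma α β z).re := by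
  rw [jacobiSigma, one_div, cpow_inv_two_re]
  exact Real.sqrt_nonneg _

theorem jacobiSigma_eq_of_sq_eq {z s : ℂ} (hs : 0 < s.re)
    (h : s ^ 2 = (1 + α + β) ^ 2 + 4 * z) : jacobiSigma α β z = s := by
  rw [jacobiSigma, ← h, one_div, sq_cpow_two_inv hs]

theorem tendsto_jacobiSigma_nhdsNE {z₀ : ℂ}
    (hz₀ : 0 ≤ ((1 + α + β) ^ 2 + 4 * z₀ : ℂ).re ∨ ((1 + α + β) ^ 2 + 4 * z₀ : ℂ).im ≠ 0) :
    Tendsto (jacobiSigma α β) (𝓝[≠] z₀) (𝓝[≠] (jacobiSigma α β z₀)) := by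
  have hcont : ContinuousAt (jacobiSigma α β) z₀ :=
    ContinuousAt.comp (f := fun z : ℂ ↦ ((1 : ℂ) + α + β) ^ 2 + 4 * z)
      (continuousAt_cpow_const_of_re_pos hz₀ (by norm_num)) (by fun_prop)
  exact hcont.continuousWithinAt.tendsto_nhdsWithin fun z hz ↦ (jacobiSigma_injective α β).ne hz

theorem exists_tendsto_nhdsNE_tendsto_jacobiSigma (α β : ℝ) (z₀ : ℂ) :
    ∃ path : ℝ → ℂ, Tendsto path (𝓝[>] 0) (𝓝[≠] z₀) ∧
      Tendsto (jacobiSigma α β ∘ path) (𝓝[>] 0) (𝓝 (jacobiSigma α β z₀)) := by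
  set σ₀ := jacobiSigma α β z₀
  set path : ℝ → ℂ := fun t ↦ ((σ₀ + t) ^ 2 - (1 + α + β) ^ 2) / 4
  have hσ_path : ∀ t > (0 : ℝ), jacobiSigma α β (path t) = σ₀ + t := fun t ht ↦
    jacobiSigma_eq_of_sq_eq
      (by simpa using add_pos_of_nonneg_of_pos (re_jacobiSigma_nonneg α β z₀) ht)
      (by simp only [path]; ring)
  have hshift : Tendsto (fun t : ℝ ↦ σ₀ + t) (𝓝[>] 0) (𝓝 σ₀) := by
    simpa using ((continuous_ofReal.tendsto (0 : ℝ)).const_add σ₀).mono_left nhdsWithin_le_nhds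
  have hz₀ : z₀ = (σ₀ ^ 2 - (1 + α + β) ^ 2) / 4 := by
    rw [jacobiSigma_sq]
    ring
  refine ⟨path, tendsto_nhdsWithin_iff.2 ⟨?_, ?_⟩, ?_⟩
  · rw [hz₀]
    exact ((hshift.pow 2).sub_const _).div_const 4
  · filter_upwards [self_mem_nhdsWithin] with t (ht : 0 < t) hpath
    have hσ := hσ_path t ht
    rw [hpath] at hσ
    simp [σ₀, ht.ne'] at hσ
  · exact hshift.congr' (eventually_nhdsWithin_of_forall fun t ht ↦ (hσ_path t ht).symm)

noncomputable def jacobiWTmOfSigma (α β : ℝ) (s : ℂ) : ℂ :=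
  (2 : ℂ) ^ ((1 : ℂ) + α + β) * (β : ℂ)
    * (Gamma (1 + β) / Gamma (1 - β))
    * (Gamma ((1 + α - β + s) / 2) * Gamma ((1 + α - β - s) / 2))
    / (Gamma ((1 + α + β + s) / 2) * Gamma ((1 + α + β - s) / 2))

theorem jacobiWTm_eq_jacobiWTmOfSigma (α β : ℝ) (z : ℂ) :
    jacobiWTm α β z = jacobiWTmOfSigma α β (jacobiSigma α β z) :=
  rfl

theorem jacobiWTmOfSigma_eq (α β : ℝ) (s : ℂ) :
    jacobiWTmOfSigma α β s = (2 : ℂ) ^ ((1 : ℂ) + α + β) * β * (Gamma (1 + β) / Gamma (1 - β))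
      * Gamma ((1 + α - β + s) / 2) * Gamma ((1 + α - β - s) / 2)
      * (Gamma ((1 + α + β + s) / 2))⁻¹ * (Gamma ((1 + α + β - s) / 2))⁻¹ := by
  rw [jacobiWTmOfSigma, div_eq_mul_inv, mul_inv]
  ring

theorem continuousAt_jacobiWTmOfSigma {s : ℂ} (h₁ : ∀ m : ℕ, (1 + α - β + s) / 2 ≠ -m)
    (h₂ : ∀ m : ℕ, (1 + α - β - s) / 2 ≠ -m) : ContinuousAt (jacobiWTmOfSigma α β) s := by
  have hΓ₁ : ContinuousAt (fun s ↦ Gamma ((1 + α - β + s) / 2)) s :=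
    ContinuousAt.comp (f := fun s : ℂ ↦ (1 + α - β + s) / 2)
      (differentiableAt_Gamma _ h₁).continuousAt (by fun_prop)
  have hΓ₂ : ContinuousAt (fun s ↦ Gamma ((1 + α - β - s) / 2)) s :=
    ContinuousAt.comp (f := fun s : ℂ ↦ (1 + α - β - s) / 2)
      (differentiableAt_Gamma _ h₂).continuousAt (by fun_prop)
  have hΓinv₃ : Continuous fun s ↦ (Gamma ((1 + α + β + s) / 2))⁻¹ :=
    differentiable_one_div_Gamma.continuous.comp (by fun_prop)
  have hΓinv₄ : Continuous fun s ↦ (Gamma ((1 + α + β - s) / 2))⁻¹ :=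
    differentiable_one_div_Gamma.continuous.comp (by fun_prop)
  simp only [funext (jacobiWTmOfSigma_eq α β)]
  exact (((continuousAt_const.mul hΓ₁).mul hΓ₂).mul hΓinv₃.continuousAt).mul hΓinv₄.continuousAt

theorem tendsto_norm_jacobiWTmOfSigma_nhdsNE (hα : -1 < α) (hβ : β ∈ Set.Ioo (-1 : ℝ) 0)
    (n : ℕ) :
    Tendsto (fun s ↦ ‖jacobiWTmOfSigma α β s‖) (𝓝[≠] (1 + α - β + 2 * n : ℂ)) atTop := by
  obtain ⟨hβ₁, hβ₂⟩ := hβ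
  set c : ℂ := 1 + α - β + 2 * n
  set G : ℂ → ℂ := fun s ↦ (2 : ℂ) ^ ((1 : ℂ) + α + β) * β * (Gamma (1 + β) / Gamma (1 - β))
    * Gamma ((1 + α - β + s) / 2) * (Gamma ((1 + α + β + s) / 2))⁻¹
    * (Gamma ((1 + α + β - s) / 2))⁻¹
  have hF : ∀ s, ‖jacobiWTmOfSigma α β s‖ = ‖G s‖ * ‖Gamma ((1 + α - β - s) / 2)‖ := by
    intro s
    rw [jacobiWTmOfSigma_eq, ← norm_mul]
    congr 1
    ring
  have hre₁ : 0 < ((1 + α - β + c) / 2).re := by simp [c]; linarith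
  have hre₃ : 0 < ((1 + α + β + c) / 2).re := by simp [c]; linarith
  have h₄ : (1 + α + β - c) / 2 = β - n := by ring
  have hG_cont : ContinuousAt G c := by
    have hΓ₁ : ContinuousAt (fun s ↦ Gamma ((1 + α - β + s) / 2)) c :=
      ContinuousAt.comp (f := fun s : ℂ ↦ (1 + α - β + s) / 2)
        (continuousAt_Gamma _ (ne_neg_natCast_of_re_pos hre₁)) (by fun_prop)
    have hΓinv₃ : Continuous fun s ↦ (Gamma ((1 + α + β + s) / 2))⁻¹ :=
      differentiable_one_div_Gamma.continuous.comp (by fun_prop)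
    have hΓinv₄ : Continuous fun s ↦ (Gamma ((1 + α + β - s) / 2))⁻¹ :=
      differentiable_one_div_Gamma.continuous.comp (by fun_prop)
    exact ((continuousAt_const.mul hΓ₁).mul hΓinv₃.continuousAt).mul hΓinv₄.continuousAt
  have hG_ne : G c ≠ 0 := by
    have h2 : (2 : ℂ) ^ ((1 : ℂ) + α + β) ≠ 0 := by simp
    have hβ₀ : (β : ℂ) ≠ 0 := by exact_mod_cast hβ₂.ne
    have hΓ_add : Gamma (1 + β) ≠ 0 := Gamma_ne_zero_of_re_pos (by simp; linarith)
    have hΓ_sub : Gamma (1 - β) ≠ 0 := Gamma_ne_zero_of_re_pos (by simp; linarith)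
    have hΓ₁ := Gamma_ne_zero_of_re_pos hre₁
    have hΓ₃ := Gamma_ne_zero_of_re_pos hre₃
    have hΓ₄ : Gamma ((1 + α + β - c) / 2) ≠ 0 := by
      rw [h₄]
      exact Gamma_ne_zero (ofReal_sub_natCast_ne_neg_natCast ⟨hβ₁, hβ₂⟩ n)
    simp only [G]
    exact mul_ne_zero (mul_ne_zero (mul_ne_zero (mul_ne_zero (mul_ne_zero h2 hβ₀)
      (div_ne_zero hΓ_add hΓ_sub)) hΓ₁) (inv_ne_zero hΓ₃)) (inv_ne_zero hΓ₄)
  have harg : Tendsto (fun s : ℂ ↦ (1 + α - β - s) / 2) (𝓝[≠] c) (𝓝[≠] (-n : ℂ)) := by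
    have hc : (1 + α - β - c) / 2 = -n := by ring
    rw [← hc]
    refine (Continuous.continuousWithinAt (by fun_prop)).tendsto_nhdsWithin fun s hs hs' ↦ hs ?_
    rw [Set.mem_singleton_iff] at hs' ⊢
    linear_combination -2 * hs'
  exact ((hG_cont.norm.tendsto.mono_left nhdsWithin_le_nhds).pos_mul_atTop (norm_pos_iff.2 hG_ne)
    ((tendsto_norm_Gamma_nhdsNE_neg_nat n).comp harg)).congr fun s ↦ (hF s).symm

theorem tendsto_norm_jacobiWTm_nhdsNE (hα : -1 < α) (hβ : β ∈ Set.Ioo (-1 : ℝ) 0) (n : ℕ) :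
    Tendsto (fun z ↦ ‖jacobiWTm α β z‖) (𝓝[≠] ((n - β) * (n + 1 + α) : ℂ)) atTop := by
  set c : ℂ := 1 + α - β + 2 * n
  have hc_real : c = ((1 + α - β + 2 * n : ℝ) : ℂ) := by push_cast; rfl
  have hc_sq : c ^ 2 = (1 + α + β) ^ 2 + 4 * ((n - β) * (n + 1 + α)) := by ring
  have hc_pos : 0 < c.re := by rw [hc_real, ofReal_re]; linarith [hβ.2, n.cast_nonneg (α := ℝ)]
  have hσ : jacobiSigma α β ((n - β) * (n + 1 + α)) = c := jacobiSigma_eq_of_sq_eq hc_pos hc_sq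
  have hσ_tendsto :
      Tendsto (jacobiSigma α β) (𝓝[≠] ((n - β) * (n + 1 + α) : ℂ)) (𝓝[≠] c) := by
    rw [← hσ]
    refine tendsto_jacobiSigma_nhdsNE (Or.inl ?_)
    rw [← hc_sq, hc_real, ← ofReal_pow, ofReal_re]
    positivity
  simp only [jacobiWTm_eq_jacobiWTmOfSigma]
  exact (tendsto_norm_jacobiWTmOfSigma_nhdsNE hα hβ n).comp hσ_tendsto

theorem not_tendsto_norm_jacobiWTm_nhdsNE (hαβ : 0 < 1 + α - β) {z₀ : ℂ}
    (hz₀ : ∀ n : ℕ, z₀ ≠ (n - β) * (n + 1 + α)) :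
    ¬ Tendsto (fun z ↦ ‖jacobiWTm α β z‖) (𝓝[≠] z₀) atTop := by
  set σ₀ := jacobiSigma α β z₀
  have h₁ : ∀ m : ℕ, (1 + α - β + σ₀) / 2 ≠ -m :=
    ne_neg_natCast_of_re_pos (by simp; linarith [re_jacobiSigma_nonneg α β z₀])
  have h₂ : ∀ m : ℕ, (1 + α - β - σ₀) / 2 ≠ -m := by
    intro m hm
    have hσ₀ : σ₀ = 1 + α - β + 2 * m := by linear_combination -2 * hm
    have hsq : σ₀ ^ 2 = (1 + α + β) ^ 2 + 4 * z₀ := jacobiSigma_sq α β z₀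
    rw [hσ₀] at hsq
    exact hz₀ m (by linear_combination -hsq / 4)
  obtain ⟨path, hpath, hσ_path⟩ := exists_tendsto_nhdsNE_tendsto_jacobiSigma α β z₀
  have hlim : Tendsto (fun t ↦ ‖jacobiWTmOfSigma α β (jacobiSigma α β (path t))‖) (𝓝[>] 0)
      (𝓝 ‖jacobiWTmOfSigma α β σ₀‖) :=
    ((continuousAt_jacobiWTmOfSigma h₁ h₂).tendsto.comp hσ_path).norm
  simp only [jacobiWTm_eq_jacobiWTmOfSigma]
  exact fun h ↦ not_tendsto_atTop_of_tendsto_nhds hlim (h.comp hpath)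

end

/-- for `α ≥ 1`, `β ∈ (-1,0)`, the `m`-function `m_{0,α,β}` has poles
precisely at `z = (n-β)(n+1+α)`, `n ∈ ℕ₀`. -/
theorem jacobiWTm_poles (α β : ℝ) (hα : 1 ≤ α) (hβ : β ∈ Set.Ioo (-1 : ℝ) 0) :
    ∀ z₀ : ℂ, Tendsto (fun z => ‖jacobiWTm α β z‖) (nhdsWithin z₀ {z₀}ᶜ) atTop ↔
      ∃ n : ℕ, z₀ = ((n : ℂ) - β) * ((n : ℂ) + 1 + α) := by
  intro z₀
  constructor
  · intro h
    by_contra! hz₀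
    exact not_tendsto_norm_jacobiWTm_nhdsNE (by linarith [hβ.2]) hz₀ h
  · rintro ⟨n, rfl⟩
    exact tendsto_norm_jacobiWTm_nhdsNE (by linarith) hβ n
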